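/- arXiv:math/0209202 — 3 statements merged into one kernel-verified Lean document; each statement's English description precedes it below -/
import Mathlib

section
/- Let n, m ≥ 1, let λ : Fin n → ℝ satisfy λ_i = 0 whenever i ≥ min(n,m) and the area-decreasing condition |λ_i · λ_j| ≤ 1 for all i ≠ j, and let μ be an n × m real matrix. Then Σ_{i<n, α<m} μ_{iα}² + 2 Σ_{i<j<min(n,m)} λ_i λ_j μ_{ij} μ_{ji} + Σ_{i<min(n,m)} λ_i² μ_{ii}² ≥ 0. (Equivalently, the second derivative of −ln Ω along a Grassmannian geodesic through a point of Ξ with initial gradient matrix μ, computed in formula (3.5) of the paper as −Σ μ_{iα}² − 2 Σ_{i<j} λ_iλ_j μ_{ij}μ_{ji} − Σ_i (λ_i μ_{ii})², is nonpositive.) -/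
/-- Formula (3.5) of the paper: under the area-decreasing condition
`|λ_i λ_j| ≤ 1` (for `i ≠ j`, with `λ_i = 0` for `i ≥ min(n,m)`), the quantity
`Σ μ_{iα}² + 2 Σ_{i<j} λ_i λ_j μ_{ij} μ_{ji} + Σ_i λ_i² μ_{ii}²` is nonnegative,
i.e. `(ln p)''(0) ≤ 0`, so `−ln Ω` is convex on `Ξ`. -/
theorem area_decreasing_second_variation (n m : ℕ) (hn : 1 ≤ n) (hm : 1 ≤ m)
    (lam : Fin n → ℝ)
    (hzero : ∀ i : Fin n, min n m ≤ (i : ℕ) → lam i = 0)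
    (harea : ∀ i j : Fin n, i ≠ j → |lam i * lam j| ≤ 1)
    (μ : Matrix (Fin n) (Fin m) ℝ) :
    0 ≤ (∑ i : Fin n, ∑ α : Fin m, μ i α ^ 2)
        + 2 * (∑ i : Fin (min n m), ∑ j : Fin (min n m),
            if i < j then
              lam (Fin.castLE (min_le_left n m) i) * lam (Fin.castLE (min_le_left n m) j)
                * μ (Fin.castLE (min_le_left n m) i) (Fin.castLE (min_le_right n m) j)
                * μ (Fin.castLE (min_le_left n m) j) (Fin.castLE (min_le_right n m) i)
            else 0)
        + ∑ i : Fin (min n m),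
            lam (Fin.castLE (min_le_left n m) i) ^ 2
              * μ (Fin.castLE (min_le_left n m) i) (Fin.castLE (min_le_right n m) i) ^ 2 := by
  set k := min n m with hk
  set l : Fin k → ℝ := fun i => lam (Fin.castLE (min_le_left n m) i) with hl
  set a : Fin k → Fin k → ℝ :=
    fun i j => μ (Fin.castLE (min_le_left n m) i) (Fin.castLE (min_le_right n m) j) with ha
  -- embedding
  have hinj : Function.Injective
      (fun q : Fin k × Fin k =>
        ((Fin.castLE (min_le_left n m) q.1 : Fin n),
         (Fin.castLE (min_le_right n m) q.2 : Fin m))) := by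
    intro q r h
    simp only [Prod.mk.injEq] at h
    exact Prod.ext (Fin.castLE_injective _ h.1) (Fin.castLE_injective _ h.2)
  have hA : (∑ i : Fin k, ∑ j : Fin k, a i j ^ 2)
      ≤ ∑ i : Fin n, ∑ α : Fin m, μ i α ^ 2 := by
    rw [← Finset.sum_product', ← Finset.sum_product']
    calc ∑ q : Fin k × Fin k, a q.1 q.2 ^ 2
        = ∑ p ∈ Finset.univ.map ⟨_, hinj⟩, μ p.1 p.2 ^ 2 := by
          rw [Finset.sum_map]; rfl
      _ ≤ ∑ p : Fin n × Fin m, μ p.1 p.2 ^ 2 :=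
          Finset.sum_le_sum_of_subset_of_nonneg (Finset.subset_univ _)
            (fun p _ _ => sq_nonneg _)
  -- off-diagonal sum
  have hoff : (∑ i : Fin k, ∑ j : Fin k, if i ≠ j then a i j ^ 2 else 0)
      ≤ ∑ i : Fin k, ∑ j : Fin k, a i j ^ 2 := by
    refine Finset.sum_le_sum fun i _ => Finset.sum_le_sum fun j _ => ?_
    split <;> [exact le_refl _; exact sq_nonneg _]
  -- rewrite off-diag as sum over i<j of two terms
  have hsplit : (∑ i : Fin k, ∑ j : Fin k, if i ≠ j then a i j ^ 2 else 0)
      = ∑ i : Fin k, ∑ j : Fin k, if i < j then a i j ^ 2 + a j i ^ 2 else 0 := by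
    have h1 : (∑ i : Fin k, ∑ j : Fin k, if i ≠ j then a i j ^ 2 else 0)
        = (∑ i : Fin k, ∑ j : Fin k, ((if i < j then a i j ^ 2 else 0)
            + (if j < i then a i j ^ 2 else 0))) := by
      refine Finset.sum_congr rfl fun i _ => Finset.sum_congr rfl fun j _ => ?_
      rcases lt_trichotomy i j with h | h | h
      · simp [h, h.ne, not_lt_of_gt h]
      · simp [h, lt_irrefl]
      · simp [h, h.ne', not_lt_of_gt h]
    rw [h1]
    simp only [Finset.sum_add_distrib]
    rw [Finset.sum_comm (f := fun i j => if j < i then a i j ^ 2 else 0)]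
    rw [← Finset.sum_add_distrib]
    refine Finset.sum_congr rfl fun i _ => ?_
    rw [← Finset.sum_add_distrib]
    refine Finset.sum_congr rfl fun j _ => ?_
    split <;> simp
  -- key pointwise bound
  have hkey : ∀ i j : Fin k, i < j →
      0 ≤ a i j ^ 2 + a j i ^ 2 + 2 * (l i * l j * a i j * a j i) := by
    intro i j hij
    have hne : (Fin.castLE (min_le_left n m) i) ≠ (Fin.castLE (min_le_left n m) j) :=
      fun h => hij.ne (Fin.castLE_injective _ h)
    have := harea _ _ hne
    have h1 : l i * l j ≤ 1 := le_of_abs_le this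
    have h2 : -1 ≤ l i * l j := neg_le_of_abs_le this
    nlinarith [sq_nonneg (a i j + a j i), sq_nonneg (a i j - a j i),
      mul_nonneg (sub_nonneg.2 h1) (sq_nonneg (a i j - a j i)),
      mul_nonneg (by linarith : (0:ℝ) ≤ 1 + l i * l j) (sq_nonneg (a i j + a j i))]
  have hcross : 0 ≤ (∑ i : Fin k, ∑ j : Fin k, if i < j then a i j ^ 2 + a j i ^ 2 else 0)
      + 2 * (∑ i : Fin k, ∑ j : Fin k,
          if i < j then l i * l j * a i j * a j i else 0) := by
    rw [Finset.mul_sum]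
    simp only [Finset.mul_sum]
    rw [← Finset.sum_add_distrib]
    refine Finset.sum_nonneg fun i _ => ?_
    rw [← Finset.sum_add_distrib]
    refine Finset.sum_nonneg fun j _ => ?_
    split
    · exact hkey i j (by assumption)
    · simp
  have hdiag : 0 ≤ ∑ i : Fin k, l i ^ 2 * a i i ^ 2 :=
    Finset.sum_nonneg fun i _ => mul_nonneg (sq_nonneg _) (sq_nonneg _)
  linarith [hsplit ▸ (hoff.trans hA)]
end

section
/- Let m ≥ 2 and let λ : Fin m → ℝ with λ_α ≥ 0 for all α, λ₀ > 0, λ₁ > 0, λ₀·λ₁ = 1, and λ₀·λ_α ≤ 1 and λ₁·λ_α ≤ 1 for all α. Let μ : Fin 2 → Fin m → ℝ satisfy (λ₀/(1+λ₀²))·μ₀₀ + (λ₁/(1+λ₁²))·μ₁₁ = 0. Set S₀ = (1−λ₀²)/(1+λ₀²), S₁ = (1−λ₁²)/(1+λ₁²), and T_α = (λ_α² − 1)/(1+λ_α²) for each α. Then Σ_α μ₀α²·(S₀ − T_α) + Σ_α μ₁α²·(S₁ − T_α) ≥ 0. -/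
/-- The final inequality in the proof of Theorem 4.1 (convexity of `Ξ`):
at a boundary point with `λ₀ λ₁ = 1` and first variation vanishing,
`Σ_α μ₀α²(S₀ − T_α) + Σ_α μ₁α²(S₁ − T_α) ≥ 0`. -/
theorem second_variation_nonneg (m : ℕ) (hm : 2 ≤ m) (lam : Fin m → ℝ)
    (hpos : ∀ α, 0 ≤ lam α)
    (h0 : 0 < lam ⟨0, by omega⟩) (h1 : 0 < lam ⟨1, by omega⟩)
    (hprod : lam ⟨0, by omega⟩ * lam ⟨1, by omega⟩ = 1)
    (harea0 : ∀ α, lam ⟨0, by omega⟩ * lam α ≤ 1)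
    (harea1 : ∀ α, lam ⟨1, by omega⟩ * lam α ≤ 1)
    (μ : Fin 2 → Fin m → ℝ)
    (hlin : lam ⟨0, by omega⟩ / (1 + lam ⟨0, by omega⟩ ^ 2) * μ 0 ⟨0, by omega⟩
        + lam ⟨1, by omega⟩ / (1 + lam ⟨1, by omega⟩ ^ 2) * μ 1 ⟨1, by omega⟩ = 0)
    (S₀ S₁ : ℝ) (T : Fin m → ℝ)
    (hS₀ : S₀ = (1 - lam ⟨0, by omega⟩ ^ 2) / (1 + lam ⟨0, by omega⟩ ^ 2))
    (hS₁ : S₁ = (1 - lam ⟨1, by omega⟩ ^ 2) / (1 + lam ⟨1, by omega⟩ ^ 2))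
    (hT : ∀ α, T α = (lam α ^ 2 - 1) / (1 + lam α ^ 2)) :
    0 ≤ (∑ α, μ 0 α ^ 2 * (S₀ - T α)) + ∑ α, μ 1 α ^ 2 * (S₁ - T α) := by
  apply add_nonneg <;> apply Finset.sum_nonneg <;> intro α _ <;>
    apply mul_nonneg (sq_nonneg _) <;> rw [sub_nonneg, hT α]
  · rw [hS₀, div_le_div_iff₀ (by positivity) (by positivity)]
    nlinarith [harea0 α, mul_nonneg h0.le (hpos α)]
  · rw [hS₁, div_le_div_iff₀ (by positivity) (by positivity)]
    nlinarith [harea1 α, mul_nonneg h1.le (hpos α)]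
end

section
/- Let Z : ℝ → Matrix (Fin n) (Fin m) ℝ be twice differentiable with Z(0) = 0, and write μ = Z'(0). Define g(s) = 1 + Z(s)·Z(s)ᵀ (an n × n matrix) and h(s) = (det g(s))^{-1/2}. Then: (i) g_{ij}'(0) = 0 and g_{ij}''(0) = 2 Σ_α μ_{iα} μ_{jα} for all i, j; (ii) h'(0) = 0 and h''(0) = − Σ_{i,α} μ_{iα}². -/
/-!
Each entry `g_ij = δ_ij + Σ_α Z_iα Z_jα` is a sum of products of two functions vanishing at `0`,
so `g = 1 + O(s²)` with `g''(0) = 2 μ μᵀ`. In the Leibniz expansion of `det g`, a non-identity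
permutation picks at least two off-diagonal entries, each `O(s²)`, so only the diagonal product
survives to second order: `det g = 1 + (s²/2) tr g''(0) + o(s²)`. The chain rule for
`t ↦ t^(-1/2)` at `t = 1` then gives `h'(0) = 0` and `h''(0) = -(1/2) tr g''(0)`.
All of this is bookkeeping of 2-jets (value, first and second derivative at a point), which
satisfy the Leibniz and chain rules.
-/

open Matrix Filter Topology Finset

def HasJet2At (f : ℝ → ℝ) (a b c x : ℝ) : Prop :=
  ∃ f' : ℝ → ℝ, (∀ᶠ s in 𝓝 x, HasDerivAt f (f' s) s) ∧ HasDerivAt f' c x ∧ f x = a ∧ f' x = b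

namespace HasJet2At

variable {f g : ℝ → ℝ} {a b c a' b' c' x : ℝ}

theorem of_differentiableAt (hf : ∀ᶠ s in 𝓝 x, DifferentiableAt ℝ f s)
    (hf' : DifferentiableAt ℝ (deriv f) x) :
    HasJet2At f (f x) (deriv f x) (deriv (deriv f) x) x :=
  ⟨deriv f, hf.mono fun _ hs => hs.hasDerivAt, hf'.hasDerivAt, rfl, rfl⟩

theorem deriv_eq (hf : HasJet2At f a b c x) : deriv f x = b := by
  obtain ⟨f', hf', -, -, rfl⟩ := hf
  exact hf'.self_of_nhds.deriv

theorem deriv_deriv_eq (hf : HasJet2At f a b c x) : deriv (deriv f) x = c := by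
  obtain ⟨f', hf', hf'', -, -⟩ := hf
  have : deriv f =ᶠ[𝓝 x] f' := hf'.mono fun _ hs => hs.deriv
  rw [this.deriv_eq, hf''.deriv]

theorem const (a x : ℝ) : HasJet2At (fun _ => a) a 0 0 x :=
  ⟨fun _ => 0, .of_forall fun s => hasDerivAt_const s a, hasDerivAt_const x 0, rfl, rfl⟩

theorem add (hf : HasJet2At f a b c x) (hg : HasJet2At g a' b' c' x) :
    HasJet2At (fun s => f s + g s) (a + a') (b + b') (c + c') x := by
  obtain ⟨f', hf', hf'', rfl, rfl⟩ := hf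
  obtain ⟨g', hg', hg'', rfl, rfl⟩ := hg
  exact ⟨fun s => f' s + g' s, hf'.and hg' |>.mono fun _ h => h.1.add h.2, hf''.add hg'', rfl,
    rfl⟩

theorem mul (hf : HasJet2At f a b c x) (hg : HasJet2At g a' b' c' x) :
    HasJet2At (fun s => f s * g s) (a * a') (a * b' + b * a') (a * c' + 2 * b * b' + c * a') x := by
  obtain ⟨f', hf', hf'', rfl, rfl⟩ := hf
  obtain ⟨g', hg', hg'', rfl, rfl⟩ := hg
  refine ⟨fun s => f' s * g s + f s * g' s, hf'.and hg' |>.mono fun _ h => h.1.mul h.2, ?_, rfl,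
    by ring⟩
  exact ((hf''.mul hg'.self_of_nhds).add (hf'.self_of_nhds.mul hg'')).congr_deriv (by ring)

theorem const_mul (k : ℝ) (hf : HasJet2At f a b c x) :
    HasJet2At (fun s => k * f s) (k * a) (k * b) (k * c) x := by
  simpa using (const k x).mul hf

theorem comp (hg : HasJet2At g a' b' c' a) (hf : HasJet2At f a b c x) :
    HasJet2At (fun s => g (f s)) a' (b' * b) (c' * b ^ 2 + b' * c) x := by
  obtain ⟨g', hg', hg'', rfl, rfl⟩ := hg
  obtain ⟨f', hf', hf'', rfl, rfl⟩ := hf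
  have hfx := hf'.self_of_nhds
  have hg'f : ∀ᶠ s in 𝓝 x, HasDerivAt g (g' (f s)) (f s) :=
    hfx.continuousAt.eventually hg'
  refine ⟨fun s => g' (f s) * f' s, hg'f.and hf' |>.mono fun s h => h.1.comp s h.2, ?_, rfl, rfl⟩
  exact ((hg''.comp x hfx).mul hf'').congr_deriv (by simp only [Function.comp_apply]; ring)

theorem rpow_const {a : ℝ} (ha : 0 < a) (p : ℝ) :
    HasJet2At (fun t => t ^ p) (a ^ p) (p * a ^ (p - 1)) (p * ((p - 1) * a ^ (p - 2))) a := by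
  refine ⟨fun t => p * t ^ (p - 1), (lt_mem_nhds ha).mono fun t ht =>
    Real.hasDerivAt_rpow_const (Or.inl ht.ne'), ?_, rfl, rfl⟩
  exact ((Real.hasDerivAt_rpow_const (Or.inl ha.ne')).const_mul p).congr_deriv (by ring_nf)

section Finset

variable {ι : Type*} {s : Finset ι} {f : ι → ℝ → ℝ} {a b c : ι → ℝ}

theorem finset_sum (hf : ∀ i ∈ s, HasJet2At (f i) (a i) (b i) (c i) x) :
    HasJet2At (fun t => ∑ i ∈ s, f i t) (∑ i ∈ s, a i) (∑ i ∈ s, b i) (∑ i ∈ s, c i) x := by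
  classical
  induction s using Finset.induction_on with
  | empty => simpa using const 0 x
  | insert j s hj ih =>
    simp only [sum_insert hj]
    exact (hf j (mem_insert_self j s)).add (ih fun i hi => hf i (mem_insert_of_mem hi))

theorem exists_finset_prod (hf : ∀ i ∈ s, HasJet2At (f i) (a i) (b i) (c i) x) :
    ∃ a b c, HasJet2At (fun t => ∏ i ∈ s, f i t) a b c x := by
  classical
  induction s using Finset.induction_on with
  | empty => exact ⟨1, 0, 0, by simpa using const 1 x⟩
  | insert j s hj ih =>
    obtain ⟨a', b', c', hs⟩ := ih fun i hi => hf i (mem_insert_of_mem hi)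
    simp only [prod_insert hj]
    exact ⟨_, _, _, (hf j (mem_insert_self j s)).mul hs⟩

theorem finset_prod_of_one (hf : ∀ i ∈ s, HasJet2At (f i) 1 0 (c i) x) :
    HasJet2At (fun t => ∏ i ∈ s, f i t) 1 0 (∑ i ∈ s, c i) x := by
  classical
  induction s using Finset.induction_on with
  | empty => simpa using const 1 x
  | insert j s hj ih =>
    simp only [prod_insert hj, sum_insert hj]
    simpa [add_comm] using
      (hf j (mem_insert_self j s)).mul (ih fun i hi => hf i (mem_insert_of_mem hi))

theorem finset_prod_of_flat_pair [DecidableEq ι] {i j : ι} (hij : i ≠ j) (hi : i ∈ s) (hj : j ∈ s)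
    (hf : ∀ k ∈ s, HasJet2At (f k) (a k) (b k) (c k) x)
    (hai : a i = 0) (hbi : b i = 0) (haj : a j = 0) (hbj : b j = 0) :
    HasJet2At (fun t => ∏ k ∈ s, f k t) 0 0 0 x := by
  have hj' : j ∈ s.erase i := mem_erase.mpr ⟨hij.symm, hj⟩
  obtain ⟨a', b', c', hrest⟩ := exists_finset_prod fun k hk =>
    hf k (mem_of_mem_erase (mem_of_mem_erase hk))
  have hfi := hf i hi
  have hfj := hf j hj
  rw [hai, hbi] at hfi
  rw [haj, hbj] at hfj
  simp_rw [← mul_prod_erase s _ hi, ← mul_prod_erase (s.erase i) _ hj']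
  simpa using hfi.mul (hfj.mul hrest)

end Finset

end HasJet2At

theorem hasJet2At_det {ι : Type*} [Fintype ι] [DecidableEq ι] {M : ℝ → Matrix ι ι ℝ}
    {C : Matrix ι ι ℝ} {x : ℝ}
    (hM : ∀ i j, HasJet2At (fun s => M s i j) ((1 : Matrix ι ι ℝ) i j) 0 (C i j) x) :
    HasJet2At (fun s => (M s).det) 1 0 C.trace x := by
  have hterm : ∀ σ : Equiv.Perm ι,
      HasJet2At (fun s => (Equiv.Perm.sign σ : ℝ) * ∏ i, M s (σ i) i)
        (if σ = 1 then 1 else 0) 0 (if σ = 1 then C.trace else 0) x := by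
    intro σ
    split_ifs with hσ
    · subst hσ
      simpa [trace] using HasJet2At.finset_prod_of_one fun i _ => by simpa using hM i i
    · -- `σ` moves `i` and `σ i`, so the product contains two off-diagonal entries.
      obtain ⟨i, hi⟩ : ∃ i, σ i ≠ i := not_forall.mp fun h => hσ (Equiv.ext h)
      have hσi : σ (σ i) ≠ σ i := fun h => hi (σ.injective h)
      simpa using (HasJet2At.finset_prod_of_flat_pair hi.symm (mem_univ i) (mem_univ (σ i))
        (fun k _ => hM (σ k) k) (one_apply_ne hi) rfl (one_apply_ne hσi) rfl).const_mul
        (Equiv.Perm.sign σ : ℝ)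
  simp_rw [det_apply']
  simpa using HasJet2At.finset_sum fun σ (_ : σ ∈ univ) => hterm σ

theorem hasJet2At_one_add_mul_transpose {ι κ : Type*} [Fintype κ] [DecidableEq ι]
    {Z : ℝ → Matrix ι κ ℝ} {μ ν : Matrix ι κ ℝ} {x : ℝ}
    (hZ : ∀ i α, HasJet2At (fun s => Z s i α) 0 (μ i α) (ν i α) x) (i j : ι) :
    HasJet2At (fun s => (1 + Z s * (Z s)ᵀ : Matrix ι ι ℝ) i j) ((1 : Matrix ι ι ℝ) i j) 0
      (2 * ∑ α, μ i α * μ j α) x := by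
  have hsum := HasJet2At.finset_sum fun α (_ : α ∈ univ) => (hZ i α).mul (hZ j α)
  simp only [zero_mul, mul_zero, add_zero, zero_add, sum_const_zero] at hsum
  simpa [mul_apply, mul_sum, mul_assoc] using (HasJet2At.const ((1 : Matrix ι ι ℝ) i j) x).add hsum

/-- Equation (3.3) of the paper: along a curve of matrices `Z(s)` with `Z(0) = 0`
and `Z'(0) = μ`, the metric `g(s) = 1 + Z Zᵀ` satisfies `g'(0) = 0`,
`g''(0)_{ij} = 2 Σ_α μ_{iα} μ_{jα}`, and `h(s) = (det g(s))^{-1/2}` satisfies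
`h'(0) = 0` and `h''(0) = −Σ μ_{iα}²`. -/
theorem metric_determinant_variation (n m : ℕ)
    (Z : ℝ → Matrix (Fin n) (Fin m) ℝ)
    (hZ₁ : ∀ i α, Differentiable ℝ fun s => Z s i α)
    (hZ₂ : ∀ i α, Differentiable ℝ (deriv fun s => Z s i α))
    (hZ0 : Z 0 = 0)
    (μ : Matrix (Fin n) (Fin m) ℝ)
    (hμ : ∀ i α, μ i α = deriv (fun s => Z s i α) 0) :
    (∀ i j : Fin n,
        deriv (fun s : ℝ => (1 + Z s * (Z s)ᵀ : Matrix (Fin n) (Fin n) ℝ) i j) 0 = 0 ∧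
        deriv (deriv fun s : ℝ => (1 + Z s * (Z s)ᵀ : Matrix (Fin n) (Fin n) ℝ) i j) 0
          = 2 * ∑ α, μ i α * μ j α) ∧
    deriv (fun s : ℝ => Matrix.det (1 + Z s * (Z s)ᵀ) ^ (-(1 / 2) : ℝ)) 0 = 0 ∧
    deriv (deriv fun s : ℝ => Matrix.det (1 + Z s * (Z s)ᵀ) ^ (-(1 / 2) : ℝ)) 0
      = -∑ i : Fin n, ∑ α : Fin m, μ i α ^ 2 := by
  have hZ : ∀ i α, HasJet2At (fun s => Z s i α) 0 (μ i α)
      (deriv (deriv fun s => Z s i α) 0) 0 := fun i α => by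
    simpa [hZ0, ← hμ] using HasJet2At.of_differentiableAt (.of_forall (hZ₁ i α)) (hZ₂ i α 0)
  have hg := hasJet2At_one_add_mul_transpose hZ
  have hh := (HasJet2At.rpow_const one_pos (-(1 / 2))).comp (hasJet2At_det hg)
  refine ⟨fun i j => ⟨(hg i j).deriv_eq, (hg i j).deriv_deriv_eq⟩, ?_, ?_⟩
  · simpa using hh.deriv_eq
  · rw [hh.deriv_deriv_eq]
    simp [trace, Matrix.diag, mul_sum, sq]
end
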